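/- arXiv:1606.08972 — 6 statements merged into one kernel-verified Lean document; each statement's English description precedes it below -/
import Mathlib

section
/- Let G be a graph, L a linear order on V(G), and I a set of vertices such that WReach_r[G,L,v] ∩ I = {v} for every v ∈ I. Then for every v ∈ I, after deleting the set WReach_r[G,L,v] \ {v} from G, the vertex v is at distance greater than r from every other vertex of I in the resulting graph. -/
/-!
If a walk of length at most `r` joins two vertices `v ≠ u` of `I`, its `L`-minimum vertex `m`
is weakly `r`-reachable from both ends. Avoiding `WReach_r[G,L,v] \ {v}` forces `m = v`, and
then `v ∈ WReach_r[G,L,u] ∩ I = {u}`, a contradiction.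
-/

/-- The set of vertices weakly r-reachable from v with respect to L. -/
def WReach {V : Type*} (G : SimpleGraph V) (L : LinearOrder V) (r : ℕ) (v : V) : Set V :=
  {u | ∃ p : G.Walk v u, p.IsPath ∧ p.length ≤ r ∧ ∀ w ∈ p.support, L.le u w}

namespace SimpleGraph.Walk

variable {V : Type*} {G : SimpleGraph V} (L : LinearOrder V) {r : ℕ}

theorem exists_min_mem_support {v u : V} (p : G.Walk v u) :
    ∃ m ∈ p.support, ∀ w ∈ p.support, L.le m w := by
  let _ := L
  classical
  obtain ⟨m, hm, hmin⟩ := p.support.toFinset.exists_min_image id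
    ⟨v, List.mem_toFinset.2 p.start_mem_support⟩
  exact ⟨m, List.mem_toFinset.1 hm, fun w hw => hmin w (List.mem_toFinset.2 hw)⟩

theorem mem_wReach {v u : V} (p : G.Walk v u) (hlen : p.length ≤ r)
    (hmin : ∀ w ∈ p.support, L.le u w) : u ∈ WReach G L r v :=
  ⟨p.bypass, p.bypass_isPath, p.length_bypass_le_length.trans hlen,
    fun w hw => hmin w (p.support_bypass_subset_support hw)⟩

theorem mem_wReach_start_of_min {v u m : V} (p : G.Walk v u) (hlen : p.length ≤ r)
    (hm : m ∈ p.support) (hmin : ∀ w ∈ p.support, L.le m w) : m ∈ WReach G L r v :=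
  (p.takeUntil m hm).mem_wReach L ((p.length_takeUntil_le_length hm).trans hlen)
    fun w hw => hmin w (p.support_takeUntil_subset_support hm hw)

theorem mem_wReach_end_of_min {v u m : V} (p : G.Walk v u) (hlen : p.length ≤ r)
    (hm : m ∈ p.support) (hmin : ∀ w ∈ p.support, L.le m w) : m ∈ WReach G L r u := by
  have hrev : ∀ w, w ∈ p.reverse.support ↔ w ∈ p.support := by simp
  exact p.reverse.mem_wReach_start_of_min L (p.length_reverse ▸ hlen) ((hrev m).2 hm)
    fun w hw => hmin w ((hrev w).1 hw)

end SimpleGraph.Walk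

/-- If WReach_r[G,L,v] ∩ I = {v} for all v ∈ I, then deleting WReach_r[G,L,v] \ {v}
leaves v at distance greater than r from every other vertex of I: every walk of the
deleted graph from v to u ∈ I, u ≠ v, has length greater than r. -/
theorem stmt5 {V : Type*} (G : SimpleGraph V) (L : LinearOrder V) (r : ℕ) (I : Set V)
    (hI : ∀ v ∈ I, WReach G L r v ∩ I = {v}) :
    ∀ v ∈ I, ∀ u ∈ I, u ≠ v → ∀ p : G.Walk v u,
      (∀ w ∈ p.support, w ∉ WReach G L r v \ {v}) → r < p.length := by
  intro v hv u hu hne p hp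
  by_contra! hle
  obtain ⟨m, hm, hmin⟩ := p.exists_min_mem_support L
  obtain rfl : m = v := by
    by_contra hmv
    exact hp m hm ⟨p.mem_wReach_start_of_min L hle hm hmin, hmv⟩
  have hvu : m ∈ WReach G L r u ∩ I := ⟨p.mem_wReach_end_of_min L hle hm hmin, hv⟩
  rw [hI u hu] at hvu
  exact hne hvu.symm
end

section
/- Let G be a graph and r, m non-negative integers. Suppose wcol_r(G) ≤ c, and let A ⊆ V(G) be a set of size at least (c+1)·2^m. Then there exists a set S ⊆ V(G) of size at most c(c−1) and a set B ⊆ A of size at least m that is r-independent in G − S. -/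
/-
Fix an order `L` witnessing `wcol_r(G) ≤ c` and put `R a = WReach_r[G, L, a]`, so every element
of `R a` is `≤ a`. The `L`-minimum of a `u`-`v` path of length `≤ r` lies in `R u ∩ R v`, so it
suffices to find `B ⊆ A` of size `m` and `S` of size `≤ c (c - 1)`, disjoint from `B`, with
`R u ∩ R v ⊆ S` for distinct `u, v ∈ B`.

Keep the maximum `b` of `A` in `B`. The other elements `a` with `R a ∩ R b ⊆ S` are compatible
with `b`. If they are too few, add `W = R b \ S \ {b}` to `S` and keep the remaining elements of
`A` outside `W`: for each of them `R a ∩ R b` meets `W` away from `a`, so the number `s` of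
elements of `(R a).erase a` outside `S` drops. As `|W| ≤ s`, the requirement `(s + 1)(2^k - 1)`
on `|A|` for `k` more elements of `B` is met in either branch, and `S` grows by at most
`s + (s - 1) + ⋯ ≤ s (s + 1)`.
-/

theorem add_mul_two_pow_sub_one_le (s k : ℕ) :
    (s + 1) * (2 ^ k - 1) + (s - 1 + 1) * (2 ^ k - 1) + s + 1 ≤ (s + 1) * (2 ^ (k + 1) - 1) := by
  obtain ⟨q, hq⟩ : ∃ q, 2 ^ k = q + 1 := ⟨2 ^ k - 1, by have := Nat.one_le_two_pow (n := k); omega⟩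
  rw [pow_succ, hq]
  rcases s with _ | s
  · omega
  · simp only [Nat.add_sub_cancel, show (q + 1) * 2 - 1 = 2 * q + 1 by omega]
    nlinarith

theorem add_mul_sub_one_le (s : ℕ) : s + (s - 1) * (s - 1 + 1) ≤ s * (s + 1) := by
  rcases s with _ | s
  · simp
  · simp only [Nat.add_sub_cancel]
    nlinarith

namespace Finset

variable {α : Type*} [LinearOrder α] {R : α → Finset α}

def Separates (R : α → Finset α) (S B : Finset α) : Prop :=
  Disjoint B S ∧ (B : Set α).Pairwise fun u v => R u ∩ R v ⊆ S

theorem Separates.insert {S B : Finset α} {b : α} (h : Separates R S B) (hbS : b ∉ S)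
    (hbB : ∀ x ∈ B, R b ∩ R x ⊆ S) : Separates R S (insert b B) := by
  refine ⟨disjoint_insert_left.2 ⟨hbS, h.1⟩, ?_⟩
  rw [coe_insert]
  exact Set.pairwise_insert.2 ⟨h.2, fun x hx _ => ⟨hbB x hx, inter_comm (R b) (R x) ▸ hbB x hx⟩⟩

theorem inter_subset_union_erase_sdiff {a b : α} (ha : ∀ w ∈ R a, w ≤ a) (hab : a < b)
    (S : Finset α) : R a ∩ R b ⊆ S ∪ ((R b).erase b \ S) := by
  intro w hw
  rw [mem_inter] at hw
  by_cases hwS : w ∈ S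
  · exact mem_union_left _ hwS
  · exact mem_union_right _ (mem_sdiff.2 ⟨mem_erase.2 ⟨((ha w hw.1).trans_lt hab).ne, hw.2⟩, hwS⟩)

theorem card_erase_sdiff_union_lt {a b : α} (ha : ∀ w ∈ R a, w ≤ a) (hab : a < b)
    {S : Finset α} (hconf : ¬ R a ∩ R b ⊆ S) (haW : a ∉ (R b).erase b \ S) :
    ((R a).erase a \ (S ∪ ((R b).erase b \ S))).card < ((R a).erase a \ S).card := by
  obtain ⟨w, hw, hwS⟩ := not_subset.1 hconf
  have hwW := inter_subset_union_erase_sdiff ha hab S hw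
  refine card_lt_card ((ssubset_iff_of_subset (sdiff_subset_sdiff subset_rfl
    subset_union_left)).2 ⟨w, ?_, fun h => (mem_sdiff.1 h).2 hwW⟩)
  rw [mem_inter] at hw
  exact mem_sdiff.2 ⟨mem_erase.2 ⟨fun h => haW (h ▸ (mem_union.1 hwW).resolve_left hwS), hw.1⟩, hwS⟩

theorem separates_insert_of_forall_lt {A A' S T₀ T B : Finset α} {b : α} (hbA : b ∈ A)
    (hbS : b ∉ S) (hA' : A' ⊆ A) (hA'b : ∀ a ∈ A', a < b) (hT₀ : ∀ w ∈ T₀, w < b)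
    (hbA' : ∀ x ∈ A', R b ∩ R x ⊆ S ∪ T₀) (hT : ∀ w ∈ T, ∃ a ∈ A', w < a) (hBA' : B ⊆ A')
    (hsep : Separates R (S ∪ T₀ ∪ T) B) :
    (∀ w ∈ T₀ ∪ T, ∃ a ∈ A, w < a) ∧ insert b B ⊆ A ∧ (insert b B).card = B.card + 1 ∧
      Separates R (S ∪ (T₀ ∪ T)) (insert b B) := by
  have hTA : ∀ w ∈ T, ∃ a ∈ A, w < a := fun w hw => by
    obtain ⟨a, ha, hwa⟩ := hT w hw
    exact ⟨a, hA' ha, hwa⟩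
  have hbT : b ∉ T := fun hb => by
    obtain ⟨a, ha, hba⟩ := hT b hb
    exact (hA'b a ha).not_gt hba
  refine ⟨fun w hw => (mem_union.1 hw).elim (fun hw => ⟨b, hbA, hT₀ w hw⟩) (hTA w),
    insert_subset hbA (hBA'.trans hA'), card_insert_of_notMem fun hb => (hA'b b (hBA' hb)).false,
    ?_⟩
  rw [← union_assoc]
  refine hsep.insert ?_ fun x hx => (hbA' x (hBA' hx)).trans subset_union_left
  simp only [mem_union, not_or]
  exact ⟨⟨hbS, fun hb => (hT₀ b hb).false⟩, hbT⟩

/-- The clause `∀ w ∈ T, ∃ a ∈ A, w < a` lets a later, larger `b` join `B` without meeting `T`. -/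
def ExistsSeparated (R : α → Finset α) (A S : Finset α) (k s : ℕ) : Prop :=
  ∃ T B, T.card ≤ s * (s + 1) ∧ (∀ w ∈ T, ∃ a ∈ A, w < a) ∧ B ⊆ A ∧ B.card = k ∧
    Separates R (S ∪ T) B

section InsertMax

variable {A A' S : Finset α} {b : α} {k s : ℕ}

theorem ExistsSeparated.insert_max_of_compatible (h : ExistsSeparated R A' S k s) (hbA : b ∈ A)
    (hbS : b ∉ S) (hA' : A' ⊆ A) (hA'b : ∀ a ∈ A', a < b)
    (hcompat : ∀ x ∈ A', R b ∩ R x ⊆ S) : ExistsSeparated R A S (k + 1) s := by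
  obtain ⟨T, B, hT, hTA', hBA', hB, hsep⟩ := h
  obtain ⟨hTA, hBA, hBcard, hsep'⟩ := separates_insert_of_forall_lt (T₀ := ∅) hbA hbS hA' hA'b
    (by simp) (by simpa using hcompat) hTA' hBA' (by simpa using hsep)
  exact ⟨T, insert b B, hT, by simpa using hTA, hBA, by omega, by simpa using hsep'⟩

theorem ExistsSeparated.insert_max_of_conflicting (hR : ∀ a, ∀ w ∈ R a, w ≤ a)
    (h : ExistsSeparated R A' (S ∪ ((R b).erase b \ S)) k (s - 1)) (hbA : b ∈ A) (hbS : b ∉ S)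
    (hA' : A' ⊆ A) (hA'b : ∀ a ∈ A', a < b) (hW : ((R b).erase b \ S).card ≤ s) :
    ExistsSeparated R A S (k + 1) s := by
  obtain ⟨T, B, hT, hTA', hBA', hB, hsep⟩ := h
  obtain ⟨hTA, hBA, hBcard, hsep'⟩ := separates_insert_of_forall_lt hbA hbS hA' hA'b
    (fun w hw => lt_of_le_of_ne (hR b w (mem_of_mem_erase (mem_sdiff.1 hw).1))
      (ne_of_mem_erase (mem_sdiff.1 hw).1))
    (fun x hx => inter_comm (R b) (R x) ▸ inter_subset_union_erase_sdiff (hR x) (hA'b x hx) S)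
    hTA' hBA' hsep
  refine ⟨_ ∪ T, insert b B, ?_, hTA, hBA, by omega, hsep'⟩
  have := card_union_le ((R b).erase b \ S) T
  have := add_mul_sub_one_le s
  omega

end InsertMax

theorem exists_separated (hR : ∀ a, ∀ w ∈ R a, w ≤ a) (k s : ℕ) (A S : Finset α)
    (hAS : Disjoint A S) (hs : ∀ a ∈ A, ((R a).erase a \ S).card ≤ s)
    (hA : (s + 1) * (2 ^ k - 1) ≤ A.card) : ExistsSeparated R A S k s := by
  induction k generalizing s A S with
  | zero => exact ⟨∅, ∅, by simp, by simp, empty_subset _, rfl, by simp [Separates]⟩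
  | succ k ih =>
    have hsize := add_mul_two_pow_sub_one_le s k
    have hne : A.Nonempty := card_pos.1 (by omega)
    set b := A.max' hne
    have hbA : b ∈ A := A.max'_mem hne
    have hbS : b ∉ S := disjoint_left.1 hAS hbA
    have hlt : ∀ a ∈ A.erase b, a < b := fun a => A.lt_max'_of_mem_erase_max' hne
    have herase : (A.erase b).card + 1 = A.card := card_erase_add_one hbA
    set N := (A.erase b).filter fun a => R a ∩ R b ⊆ S
    set C := (A.erase b).filter fun a => ¬ R a ∩ R b ⊆ S
    have hNC : N.card + C.card = (A.erase b).card := card_filter_add_card_filter_not _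
    have hNA : N ⊆ A.erase b := filter_subset _ _
    have hCA : C ⊆ A.erase b := filter_subset _ _
    by_cases hN : (s + 1) * (2 ^ k - 1) ≤ N.card
    · refine (ih s N S (hAS.mono_left (hNA.trans (erase_subset _ _)))
        (fun a ha => hs a (mem_of_mem_erase (hNA ha))) hN).insert_max_of_compatible hbA hbS
        (hNA.trans (erase_subset _ _)) (fun a ha => hlt a (hNA ha)) fun x hx => ?_
      simpa [inter_comm] using (mem_filter.1 hx).2
    · set W := (R b).erase b \ S
      have hW : W.card ≤ s := hs b hbA
      have hCW : C \ W ⊆ A.erase b := sdiff_subset.trans hCA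
      have hsW : ∀ a ∈ C \ W, ((R a).erase a \ (S ∪ W)).card ≤ s - 1 := fun a ha => by
        obtain ⟨haC, haW⟩ := mem_sdiff.1 ha
        have : ((R a).erase a \ (S ∪ W)).card < ((R a).erase a \ S).card :=
          card_erase_sdiff_union_lt (hR a) (hlt a (hCA haC)) (mem_filter.1 haC).2 haW
        have := hs a (mem_of_mem_erase (hCA haC))
        omega
      have hCWcard : (s - 1 + 1) * (2 ^ k - 1) ≤ (C \ W).card := by
        have := card_le_card_sdiff_add_card (s := C) (t := W)
        omega
      exact (ih (s - 1) (C \ W) (S ∪ W)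
        (disjoint_union_right.2 ⟨hAS.mono_left (hCW.trans (erase_subset _ _)), sdiff_disjoint⟩)
        hsW hCWcard).insert_max_of_conflicting hR hbA hbS (hCW.trans (erase_subset _ _))
        (fun a ha => hlt a (hCW ha)) hW

end Finset

namespace SimpleGraph

variable {V : Type*} {G : SimpleGraph V} {L : LinearOrder V} {r : ℕ}

theorem self_mem_wReach (v : V) : v ∈ WReach G L r v :=
  ⟨Walk.nil, Walk.IsPath.nil, Nat.zero_le r, fun w hw => by
    rw [Walk.support_nil, List.mem_singleton] at hw
    exact hw ▸ L.le_refl v⟩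

theorem le_of_mem_wReach {u v : V} (h : u ∈ WReach G L r v) : L.le u v := by
  obtain ⟨p, -, -, hp⟩ := h
  exact hp v p.start_mem_support

theorem exists_mem_support_mem_wReach_inter {u v : V} (p : G.Walk u v) (hp : p.length ≤ r) :
    ∃ w ∈ p.support, w ∈ WReach G L r u ∩ WReach G L r v := by
  let := L
  set q := p.bypass
  have hq : q.IsPath := p.bypass_isPath
  have hqr : q.length ≤ r := p.length_bypass_le_length.trans hp
  set w := q.support.toFinset.min' ⟨u, List.mem_toFinset.2 q.start_mem_support⟩
  have hw : w ∈ q.support := List.mem_toFinset.1 (Finset.min'_mem _ _)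
  have hmin : ∀ x ∈ q.support, w ≤ x := fun x hx => Finset.min'_le _ x (List.mem_toFinset.2 hx)
  refine ⟨w, p.support_bypass_subset_support hw, ⟨q.takeUntil w hw, hq.takeUntil hw,
    (q.length_takeUntil_le_length hw).trans hqr,
    fun x hx => hmin x (q.support_takeUntil_subset_support hw hx)⟩,
    ⟨(q.dropUntil w hw).reverse, (hq.dropUntil hw).reverse, ?_, fun x hx => ?_⟩⟩
  · exact (Walk.length_reverse _).trans_le ((q.length_dropUntil_le_length hw).trans hqr)
  · rw [Walk.support_reverse, List.mem_reverse] at hx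
    exact hmin x (q.support_dropUntil_subset_support hw hx)

end SimpleGraph

theorem stmt6_general {V : Type*} [Fintype V] (G : SimpleGraph V) (r m c : ℕ)
    (hc : ∃ L : LinearOrder V, ∀ v : V, (WReach G L r v).ncard ≤ c)
    (A : Finset V) (hA : (c + 1) * 2 ^ m ≤ A.card) :
    ∃ S : Finset V, S.card ≤ c * (c - 1) ∧
      ∃ B ⊆ A, m ≤ B.card ∧ (∀ b ∈ B, b ∉ S) ∧
        ∀ u ∈ B, ∀ v ∈ B, u ≠ v → ∀ p : G.Walk u v,
          (∀ w ∈ p.support, w ∉ S) → r < p.length := by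
  obtain ⟨L, hL⟩ := hc
  let := L
  let R : V → Finset V := fun v => (Set.toFinite (WReach G L r v)).toFinset
  have hR (v w : V) : w ∈ R v ↔ w ∈ WReach G L r v := Set.Finite.mem_toFinset _
  have hs : ∀ a ∈ A, ((R a).erase a \ ∅).card ≤ c - 1 := fun a _ => by
    rw [Finset.sdiff_empty, Finset.card_erase_of_mem ((hR a a).2 (SimpleGraph.self_mem_wReach a)),
      ← Set.ncard_eq_toFinset_card _]
    exact Nat.sub_le_sub_right (hL a) 1
  obtain ⟨T, B, hT, -, hBA, hB, hBT, hsep⟩ :=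
    Finset.exists_separated (fun v w hw => SimpleGraph.le_of_mem_wReach ((hR v w).1 hw))
      m (c - 1) A ∅ (Finset.disjoint_empty_right A) hs
      ((Nat.mul_le_mul (by omega) (Nat.sub_le _ _)).trans hA)
  refine ⟨T, hT.trans (by cases c <;> simp [mul_comm]), B, hBA, hB.ge,
    fun b hb hbT => Finset.disjoint_left.1 hBT hb (by simpa using hbT),
    fun u hu v hv huv p hp => ?_⟩
  by_contra! hpr
  obtain ⟨w, hwp, hwu, hwv⟩ := SimpleGraph.exists_mem_support_mem_wReach_inter (L := L) p hpr
  have hwS := hsep hu hv huv (Finset.mem_inter.2 ⟨(hR u w).2 hwu, (hR v w).2 hwv⟩)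
  exact hp w hwp (by simpa using hwS)

/-- If wcol_r(G) ≤ c (witnessed by some order) and A has size at least (c+1)·2^m, then
there are S of size at most c(c-1) and B ⊆ A of size at least m that is r-independent
in G − S. -/
theorem stmt6 {V : Type*} [Fintype V] [DecidableEq V] (G : SimpleGraph V) (r m c : ℕ)
    (hc : ∃ L : LinearOrder V, ∀ v : V, (WReach G L r v).ncard ≤ c)
    (A : Finset V) (hA : (c + 1) * 2 ^ m ≤ A.card) :
    ∃ S : Finset V, S.card ≤ c * (c - 1) ∧
      ∃ B ⊆ A, m ≤ B.card ∧ (∀ b ∈ B, b ∉ S) ∧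
        ∀ u ∈ B, ∀ v ∈ B, u ≠ v → ∀ p : G.Walk u v,
          (∀ w ∈ p.support, w ∉ S) → r < p.length :=
  stmt6_general G r m c hc A hA
end

section
/- Let G be a graph, r a positive integer, and ℓ = wcol_{2r}(G). Then splitter has a winning strategy in the simple ℓ-round radius-r splitter game on G. -/
/-- The r-ball around v in the induced subgraph of G on the vertex set s. -/
def ballIn {V : Type*} (G : SimpleGraph V) (s : Set V) (r : ℕ) (v : V) : Set V :=
  {u | u ∈ s ∧ ∃ p : G.Walk v u, (∀ w ∈ p.support, w ∈ s) ∧ p.length ≤ r}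

/-- Splitter has a winning strategy in the ℓ-round radius-r splitter game played on the
induced subgraph of G on vertex set s. -/
def SplitterWins {V : Type*} (G : SimpleGraph V) (r : ℕ) : ℕ → Set V → Prop
  | 0, s => s = ∅
  | (ℓ + 1), s => s = ∅ ∨ ∀ v ∈ s, ∃ w ∈ ballIn G s r v,
      SplitterWins G r ℓ (ballIn G s r v \ {w})

/-!
Fix an order `L` witnessing `wcol_{2r}(G) ≤ ℓ`. Whenever connector plays `v`, splitter answers
with the `L`-least vertex `w` of the current `r`-ball around `v`. Joining two paths of length
`≤ r` inside the ball through `w` shows that `w` is weakly `2r`-reachable from every vertex `u`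
that survives the round, and `w` is deleted in that round. So each round removes from the arena
one more element of the set `WReach (2r) u` of each surviving `u`; as `u` itself always lies in
that set, `u` cannot survive `ℓ` rounds.
-/

open SimpleGraph

section

variable {V : Type*} (G : SimpleGraph V)

lemma self_mem_wReach (L : LinearOrder V) (r : ℕ) (v : V) : v ∈ WReach G L r v :=
  ⟨Walk.nil, Walk.IsPath.nil, by simp, by simp⟩

variable {G} {s : Set V} {r : ℕ} {v : V}

lemma ballIn_subset : ballIn G s r v ⊆ s := fun _ hx => hx.1

lemma self_mem_ballIn (hv : v ∈ s) : v ∈ ballIn G s r v :=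
  ⟨hv, Walk.nil, by simpa using hv, by simp⟩

lemma mem_ballIn_of_mem_support [DecidableEq V] {u x : V} (p : G.Walk v u)
    (hp : ∀ w ∈ p.support, w ∈ s) (hlen : p.length ≤ r) (hx : x ∈ p.support) :
    x ∈ ballIn G s r v :=
  ⟨hp x hx, p.takeUntil x hx, fun w hw => hp w (p.support_takeUntil_subset_support hx hw),
    (p.length_takeUntil_le_length hx).trans hlen⟩

lemma mem_wReach_of_forall_ballIn_le (L : LinearOrder V) {u w : V}
    (hw : w ∈ ballIn G s r v) (hu : u ∈ ballIn G s r v)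
    (hmin : ∀ x ∈ ballIn G s r v, L.le w x) :
    w ∈ WReach G L (2 * r) u := by
  classical
  obtain ⟨-, q, hq, hqlen⟩ := hw
  obtain ⟨-, p, hp, hplen⟩ := hu
  refine ⟨(p.reverse.append q).bypass, Walk.bypass_isPath _, ?_, ?_⟩
  · calc (p.reverse.append q).bypass.length ≤ (p.reverse.append q).length :=
        Walk.length_bypass_le_length _
      _ = p.length + q.length := by simp
      _ ≤ 2 * r := by omega
  · intro x hx
    apply hmin
    have hx' := (p.reverse.append q).support_bypass_subset_support hx
    rcases (Walk.mem_support_append_iff _ _).mp hx' with hx | hx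
    · exact mem_ballIn_of_mem_support p hp hplen (by simpa using hx)
    · exact mem_ballIn_of_mem_support q hq hqlen hx

lemma splitterWins_of_ncard_wReach_le [Finite V] (L : LinearOrder V) (n : ℕ) (s : Set V)
    (hs : ∀ u ∈ s, (WReach G L (2 * r) u).ncard ≤ (WReach G L (2 * r) u \ s).ncard + n) :
    SplitterWins G r n s := by
  induction n generalizing s with
  | zero =>
    refine Set.eq_empty_of_forall_notMem fun u hu => ?_
    have hlt : (WReach G L (2 * r) u \ s).ncard < (WReach G L (2 * r) u).ncard :=
      Set.ncard_lt_ncard (Set.sdiff_ssubset_left_iff.mpr ⟨u, self_mem_wReach G L _ u, hu⟩)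
    exact absurd (hs u hu) (by omega)
  | succ n ih =>
    refine or_iff_not_imp_left.mpr fun _ v hv => ?_
    obtain ⟨w, hwB, hmin⟩ := @Set.exists_min_image V V L (ballIn G s r v) id (Set.toFinite _)
      ⟨v, self_mem_ballIn hv⟩
    refine ⟨w, hwB, ih _ fun u hu => ?_⟩
    have hgrow : insert w (WReach G L (2 * r) u \ s) ⊆
        WReach G L (2 * r) u \ (ballIn G s r v \ {w}) := by
      rintro x (rfl | ⟨hxW, hxs⟩)
      · exact ⟨mem_wReach_of_forall_ballIn_le L hwB hu.1 hmin, fun h => h.2 rfl⟩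
      · exact ⟨hxW, fun h => hxs (ballIn_subset h.1)⟩
    have hcard := Set.ncard_le_ncard hgrow
    rw [Set.ncard_insert_of_notMem (fun h => h.2 (ballIn_subset hwB))] at hcard
    have := hs u (ballIn_subset hu.1)
    omega

end

theorem stmt7_general {V : Type*} [Fintype V] (G : SimpleGraph V) (r ℓ : ℕ)
    (h : ∃ L : LinearOrder V, ∀ v : V, (WReach G L (2 * r) v).ncard ≤ ℓ) :
    SplitterWins G r ℓ (Set.univ : Set V) := by
  obtain ⟨L, hL⟩ := h
  exact splitterWins_of_ncard_wReach_le L ℓ Set.univ fun u _ => by simpa using hL u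

/-- If ℓ = wcol_{2r}(G) (witnessed by an order), splitter wins the simple ℓ-round
radius-r splitter game on G. -/
theorem stmt7 {V : Type*} [Fintype V] (G : SimpleGraph V) (r ℓ : ℕ) (hr : 0 < r)
    (h : ∃ L : LinearOrder V, ∀ v : V, (WReach G L (2 * r) v).ncard ≤ ℓ) :
    SplitterWins G r ℓ (Set.univ : Set V) :=
  stmt7_general G r ℓ h
end

section
/- Let (T, β) be a tree decomposition of a graph G, and let H_1, …, H_s be pairwise vertex-disjoint connected subgraphs of G forming a minor model of the complete graph K_s (i.e., for all i ≠ j there is an edge of G between V(H_i) and V(H_j)). Then there exists a node t of T whose bag β(t) intersects V(H_j) for every j = 1, …, s. -/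
/-!
The nodes of `T` whose bags meet a connected set `A ⊆ V(G)` form a subtree of `T`: the bags
containing a single vertex form a subtree, and the subtrees of two adjacent vertices share the
node of a bag containing their edge. For the branch sets `H_i` these subtrees pairwise intersect,
again because of the edges between branch sets. Subtrees of a tree have the Helly property:
three pairwise intersecting subtrees share the median of three pairwise intersection points, and
replacing every member of a family by its intersection with a fixed member reduces the size of
the family.
-/

structure TreeDecomp {V W : Type*} (G : SimpleGraph V) (T : SimpleGraph W) where
  bag : W → Set V
  isTree : T.IsTree
  bags_connected : ∀ v : V, (SimpleGraph.induce {t : W | v ∈ bag t} T).Connected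
  edge_in_bag : ∀ ⦃u v : V⦄, G.Adj u v → ∃ t : W, u ∈ bag t ∧ v ∈ bag t

namespace SimpleGraph

variable {V W : Type*}

theorem Walk.exists_append_eq_of_first_mem {G : SimpleGraph V} {S : Set V} :
    ∀ {u v : V} (p : G.Walk u v), v ∈ S →
      ∃ m ∈ S, ∃ (p₁ : G.Walk u m) (p₂ : G.Walk m v),
        p = p₁.append p₂ ∧ ∀ x ∈ p₁.support, x ∈ S → x = m
  | u, _, .nil, hv => ⟨u, hv, .nil, .nil, rfl, by simp⟩
  | u, _, .cons h p, hv => by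
      by_cases hu : u ∈ S
      · exact ⟨u, hu, .nil, .cons h p, rfl, by simp⟩
      obtain ⟨m, hm, p₁, p₂, rfl, hfirst⟩ := p.exists_append_eq_of_first_mem hv
      refine ⟨m, hm, .cons h p₁, p₂, rfl, ?_⟩
      intro x hx hxS
      rcases List.mem_cons.1 (by simpa using hx) with rfl | hx
      · exact absurd hxS hu
      · exact hfirst x hx hxS

theorem Walk.IsPath.append_of_support_inter {G : SimpleGraph V} {u m v : V}
    {p : G.Walk u m} {q : G.Walk m v} (hp : p.IsPath) (hq : q.IsPath)
    (hpq : ∀ x ∈ p.support, x ∈ q.support → x = m) : (p.append q).IsPath := by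
  have hq' := hq.support_nodup
  rw [← q.cons_tail_support, List.nodup_cons] at hq'
  rw [Walk.isPath_def, Walk.support_append, List.nodup_append]
  refine ⟨hp.support_nodup, hq'.2, fun x hx y hy hxy => ?_⟩
  subst hxy
  exact hq'.1 (hpq x hx (List.mem_of_mem_tail hy) ▸ hy)

theorem Preconnected.induce_of_forall_exists_walk {G : SimpleGraph V} {S : Set V}
    (h : ∀ u ∈ S, ∀ v ∈ S, ∃ p : G.Walk u v, ∀ x ∈ p.support, x ∈ S) :
    (G.induce S).Preconnected := by
  rintro ⟨u, hu⟩ ⟨v, hv⟩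
  obtain ⟨p, hp⟩ := h u hu v hv
  exact (p.connected_induce_support.preconnected ⟨u, p.start_mem_support⟩
    ⟨v, p.end_mem_support⟩).map (G.induceHomOfLE hp).toHom

theorem Preconnected.reachable_of_induce {G : SimpleGraph V} {S : Set V}
    (hS : (G.induce S).Preconnected) {u v : V} (hu : u ∈ S) (hv : v ∈ S) : G.Reachable u v :=
  (hS ⟨u, hu⟩ ⟨v, hv⟩).map (Embedding.induce S).toHom

theorem connected_induce_biUnion_of_adj {G : SimpleGraph V} {T : SimpleGraph W} {A : Set V}
    (hA : (G.induce A).Connected) {X : V → Set W} (hX : ∀ v ∈ A, (T.induce (X v)).Connected)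
    (hadj : ∀ v ∈ A, ∀ w ∈ A, G.Adj v w → (X v ∩ X w).Nonempty) :
    (T.induce (⋃ v ∈ A, X v)).Connected := by
  have hsub : ∀ v ∈ A, X v ⊆ ⋃ v ∈ A, X v := fun v hv => Set.subset_biUnion_of_mem hv
  have hreach_of_mem : ∀ (v : A) t (ht : t ∈ X v) t' (ht' : t' ∈ X v),
      (T.induce (⋃ v ∈ A, X v)).Reachable ⟨t, hsub v v.2 ht⟩ ⟨t', hsub v v.2 ht'⟩ :=
    fun v t ht t' ht' =>
      ((hX v v.2).preconnected ⟨t, ht⟩ ⟨t', ht'⟩).map (T.induceHomOfLE (hsub v v.2)).toHom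
  have hreach : ∀ {a b : A} (_ : (G.induce A).Walk a b) t (ht : t ∈ X a) t' (ht' : t' ∈ X b),
      (T.induce (⋃ v ∈ A, X v)).Reachable ⟨t, hsub a a.2 ht⟩ ⟨t', hsub b b.2 ht'⟩ := by
    intro a b p
    induction p with
    | nil => exact hreach_of_mem _
    | @cons u w _ h _ ih =>
      intro t ht t' ht'
      obtain ⟨t'', h₁, h₂⟩ := hadj u u.2 w w.2 (induce_adj.1 h)
      exact (hreach_of_mem u t ht t'' h₁).trans (ih t'' h₂ t' ht')
  rw [connected_iff]
  constructor
  · rintro ⟨t, ht⟩ ⟨t', ht'⟩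
    obtain ⟨v, hv, htv⟩ := Set.mem_iUnion₂.1 ht
    obtain ⟨v', hv', htv'⟩ := Set.mem_iUnion₂.1 ht'
    obtain ⟨p⟩ := hA.preconnected ⟨v, hv⟩ ⟨v', hv'⟩
    exact hreach p t htv t' htv'
  · obtain ⟨⟨v, hv⟩⟩ := hA.nonempty
    obtain ⟨⟨t, ht⟩⟩ := (hX v hv).nonempty
    exact ⟨⟨t, hsub v hv ht⟩⟩

variable {T : SimpleGraph W}

theorem IsAcyclic.support_subset_of_isPath (hT : T.IsAcyclic) {S : Set W}
    (hS : (T.induce S).Preconnected) {u v : W} (hu : u ∈ S) (hv : v ∈ S)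
    {p : T.Walk u v} (hp : p.IsPath) : ∀ x ∈ p.support, x ∈ S := by
  classical
  obtain ⟨q⟩ := hS ⟨u, hu⟩ ⟨v, hv⟩
  have hq : ∀ x ∈ (q.map (Embedding.induce S).toHom).support, x ∈ S := by
    simp only [Walk.support_map, List.mem_map]
    rintro _ ⟨y, -, rfl⟩
    exact y.2
  have hpq : p = (q.map (Embedding.induce S).toHom).bypass :=
    congrArg Subtype.val ((hT.subsingleton_path u v).elim ⟨p, hp⟩ ⟨_, Walk.bypass_isPath _⟩)
  exact fun x hx => hq x (Walk.support_bypass_subset_support _ (hpq ▸ hx))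

theorem IsAcyclic.connected_induce_inter (hT : T.IsAcyclic) {S₁ S₂ : Set W}
    (h₁ : (T.induce S₁).Connected) (h₂ : (T.induce S₂).Connected) (h : (S₁ ∩ S₂).Nonempty) :
    (T.induce (S₁ ∩ S₂)).Connected := by
  rw [connected_iff]
  refine ⟨Preconnected.induce_of_forall_exists_walk fun u hu v hv => ?_, h.to_subtype⟩
  obtain ⟨p, hp⟩ := (h₁.preconnected.reachable_of_induce hu.1 hv.1).exists_isPath
  exact ⟨p, fun x hx => ⟨hT.support_subset_of_isPath h₁.preconnected hu.1 hv.1 hp x hx,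
    hT.support_subset_of_isPath h₂.preconnected hu.2 hv.2 hp x hx⟩⟩

theorem IsAcyclic.inter_inter_nonempty (hT : T.IsAcyclic) {S₁ S₂ S₃ : Set W}
    (h₁ : (T.induce S₁).Preconnected) (h₂ : (T.induce S₂).Preconnected)
    (h₃ : (T.induce S₃).Preconnected) (h₁₂ : (S₁ ∩ S₂).Nonempty) (h₁₃ : (S₁ ∩ S₃).Nonempty)
    (h₂₃ : (S₂ ∩ S₃).Nonempty) : (S₁ ∩ S₂ ∩ S₃).Nonempty := by
  classical
  obtain ⟨a, ha₁, ha₂⟩ := h₁₂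
  obtain ⟨b, hb₁, hb₃⟩ := h₁₃
  obtain ⟨c, hc₂, hc₃⟩ := h₂₃
  obtain ⟨P, hP⟩ := (h₁.reachable_of_induce ha₁ hb₁).exists_isPath
  obtain ⟨Q, hQ⟩ := (h₃.reachable_of_induce hb₃ hc₃).exists_isPath
  -- The first vertex `m` of the `a`–`b` path on the `b`–`c` path is the median of `a, b, c`.
  obtain ⟨m, hmQ, P₁, P₂, rfl, hfirst⟩ :=
    P.exists_append_eq_of_first_mem (S := {x | x ∈ Q.support}) Q.start_mem_support
  have hR : (P₁.append (Q.dropUntil m hmQ)).IsPath :=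
    hP.of_append_left.append_of_support_inter (hQ.dropUntil hmQ) fun x hx hx' =>
      hfirst x hx (Q.support_dropUntil_subset_support hmQ hx')
  refine ⟨m, ⟨hT.support_subset_of_isPath h₁ ha₁ hb₁ hP m ?_,
    hT.support_subset_of_isPath h₂ ha₂ hc₂ hR m ?_⟩,
    hT.support_subset_of_isPath h₃ hb₃ hc₃ hQ m hmQ⟩
  all_goals simp [Walk.support_append]

theorem IsAcyclic.exists_mem_of_pairwise_inter_nonempty (hT : T.IsAcyclic) {ι : Type*}
    {F : ι → Set W} {s : Finset ι} (hs : s.Nonempty)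
    (hconn : ∀ i ∈ s, (T.induce (F i)).Connected)
    (hinter : ∀ i ∈ s, ∀ j ∈ s, i ≠ j → (F i ∩ F j).Nonempty) :
    ∃ t, ∀ i ∈ s, t ∈ F i := by
  induction hs using Finset.Nonempty.cons_induction generalizing F with
  | singleton a =>
    obtain ⟨⟨t, ht⟩⟩ := (hconn a (Finset.mem_singleton_self a)).nonempty
    exact ⟨t, by simpa using ht⟩
  | cons a s ha hs ih =>
    have hcons : ∀ i ∈ s, i ∈ Finset.cons a s ha := fun i => Finset.mem_cons_of_mem
    have ha' : a ∈ Finset.cons a s ha := Finset.mem_cons_self a s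
    have hconn_a := hconn a ha'
    have hinter_a : ∀ i ∈ s, (F i ∩ F a).Nonempty :=
      fun i hi => hinter i (hcons i hi) a ha' fun hia => ha (hia ▸ hi)
    obtain ⟨t, ht⟩ := ih (F := fun i => F i ∩ F a)
      (fun i hi => hT.connected_induce_inter (hconn i (hcons i hi)) hconn_a (hinter_a i hi))
      (fun i hi j hj hij => by
        rw [← Set.inter_inter_distrib_right]
        exact hT.inter_inter_nonempty (hconn i (hcons i hi)).preconnected
          (hconn j (hcons j hj)).preconnected hconn_a.preconnected
          (hinter i (hcons i hi) j (hcons j hj) hij) (hinter_a i hi) (hinter_a j hj))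
    obtain ⟨i, hi⟩ := hs
    refine ⟨t, ?_⟩
    simp only [Finset.mem_cons, forall_eq_or_imp]
    exact ⟨(ht i hi).2, fun j hj => (ht j hj).1⟩

theorem IsTree.exists_mem_of_pairwise_inter_nonempty (hT : T.IsTree) {ι : Type*} [Finite ι]
    {F : ι → Set W} (hconn : ∀ i, (T.induce (F i)).Connected)
    (hinter : ∀ i j, i ≠ j → (F i ∩ F j).Nonempty) : ∃ t, ∀ i, t ∈ F i := by
  cases nonempty_fintype ι
  rcases isEmpty_or_nonempty ι with hι | hι
  · obtain ⟨t⟩ := hT.connected.nonempty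
    exact ⟨t, isEmptyElim⟩
  · obtain ⟨t, ht⟩ := hT.isAcyclic.exists_mem_of_pairwise_inter_nonempty Finset.univ_nonempty
      (fun i _ => hconn i) (fun i _ j _ => hinter i j)
    exact ⟨t, fun i => ht i (Finset.mem_univ i)⟩

end SimpleGraph

namespace TreeDecomp

variable {V W : Type*} {G : SimpleGraph V} {T : SimpleGraph W}

def nodesMeeting (D : TreeDecomp G T) (A : Set V) : Set W :=
  {t | (D.bag t ∩ A).Nonempty}

theorem nodesMeeting_eq_biUnion (D : TreeDecomp G T) (A : Set V) :
    D.nodesMeeting A = ⋃ v ∈ A, {t | v ∈ D.bag t} := by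
  ext t
  simp [nodesMeeting, Set.Nonempty, and_comm]

theorem connected_induce_nodesMeeting (D : TreeDecomp G T) {A : Set V}
    (hA : (G.induce A).Connected) : (T.induce (D.nodesMeeting A)).Connected := by
  rw [nodesMeeting_eq_biUnion]
  exact SimpleGraph.connected_induce_biUnion_of_adj hA (fun v _ => D.bags_connected v)
    fun _ _ _ _ huv => D.edge_in_bag huv

theorem nodesMeeting_inter_nonempty_of_adj (D : TreeDecomp G T) {A B : Set V} {u v : V}
    (huv : G.Adj u v) (hu : u ∈ A) (hv : v ∈ B) :
    (D.nodesMeeting A ∩ D.nodesMeeting B).Nonempty := by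
  obtain ⟨t, hut, hvt⟩ := D.edge_in_bag huv
  exact ⟨t, ⟨u, hut, hu⟩, ⟨v, hvt, hv⟩⟩

end TreeDecomp

theorem stmt12_general {V W : Type*} (G : SimpleGraph V) (T : SimpleGraph W)
    (D : TreeDecomp G T) (s : ℕ) (H : Fin s → Set V)
    (hconn : ∀ i, (SimpleGraph.induce (H i) G).Connected)
    (hadj : ∀ i j, i ≠ j → ∃ u ∈ H i, ∃ v ∈ H j, G.Adj u v) :
    ∃ t : W, ∀ j, (D.bag t ∩ H j).Nonempty :=
  D.isTree.exists_mem_of_pairwise_inter_nonempty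
    (fun i => D.connected_induce_nodesMeeting (hconn i)) fun i j hij => by
      obtain ⟨u, hu, v, hv, huv⟩ := hadj i j hij
      exact D.nodesMeeting_inter_nonempty_of_adj huv hu hv

/-- For a minor model of K_s in G, some bag of the tree decomposition meets every
branch set. -/
theorem stmt12 {V W : Type*} (G : SimpleGraph V) (T : SimpleGraph W)
    (D : TreeDecomp G T) (s : ℕ) (H : Fin s → Set V)
    (hdisj : ∀ i j, i ≠ j → Disjoint (H i) (H j))
    (hconn : ∀ i, (SimpleGraph.induce (H i) G).Connected)
    (hadj : ∀ i j, i ≠ j → ∃ u ∈ H i, ∃ v ∈ H j, G.Adj u v) :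
    ∃ t : W, ∀ j, (D.bag t ∩ H j).Nonempty :=
  stmt12_general G T D s H hconn hadj
end

section
/- Let t be a node of a tree decomposition (T, β) of G whose bag intersects every branch set of a minor model H_1, …, H_s of K_s in G. Then the subgraphs of the torso τ(t) induced by V(H_j) ∩ β(t), for j = 1, …, s, are connected in τ(t) and form a minor model of K_s in τ(t); in particular K_s is a minor of τ(t). -/
/-- The torso of the tree decomposition at node t: the induced subgraph on β(t)
together with a clique on each adhesion set β(t) ∩ β(t') for neighbours t' of t. -/
def torso {V W : Type*} (G : SimpleGraph V) (T : SimpleGraph W)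
    (D : TreeDecomp G T) (t : W) : SimpleGraph V where
  Adj u v := u ≠ v ∧ u ∈ D.bag t ∧ v ∈ D.bag t ∧
    (G.Adj u v ∨ ∃ t' : W, T.Adj t t' ∧ u ∈ D.bag t' ∧ v ∈ D.bag t')
  symm := by
    constructor
    rintro u v ⟨h1, h2, h3, h4⟩
    exact ⟨h1.symm, h3, h2,
      h4.imp (fun h => h.symm) (fun ⟨t', ha, hb, hc⟩ => ⟨t', ha, hc, hb⟩)⟩
  loopless := by constructor; rintro v ⟨h, -⟩; exact h rfl

/-!
Inside `G[S]`, follow a walk between two vertices of `β(t)`. Whenever it leaves `β(t)`, every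
vertex it visits until it returns has all of its bags in a single component of `T - t`, namely
the one containing some neighbour `t₀` of `t`; the last vertex before leaving and the first one
after returning then both lie in `β(t) ∩ β(t₀)`, so they are adjacent in the torso. Hence
`τ(t)[S ∩ β(t)]` is connected whenever `G[S]` is. Applied to `S = H_j` and `S = H_i ∪ H_j`
this gives the connectivity of the branch sets and an edge of `τ(t)` between any two of them.
-/

open SimpleGraph

section

variable {V W : Type*} {G : SimpleGraph V} {T : SimpleGraph W}

namespace SimpleGraph

def ReachableAvoiding (T : SimpleGraph W) (t a b : W) : Prop :=
  ∃ p : T.Walk a b, t ∉ p.support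

lemma Reachable.exists_walk_of_induce {s : Set V} {a b : s} (h : (G.induce s).Reachable a b) :
    ∃ p : G.Walk a b, ∀ x ∈ p.support, x ∈ s := by
  obtain ⟨p⟩ := h
  refine ⟨p.map (Embedding.induce s).toHom, fun x hx => ?_⟩
  -- restated so that the endpoints of the walk are syntactically those of `Walk.support_map`
  have hx : x ∈ (p.map (Embedding.induce s).toHom).support := hx
  rw [Walk.support_map] at hx
  obtain ⟨⟨x, hxs⟩, -, rfl⟩ := List.mem_map.1 hx
  exact hxs

namespace ReachableAvoiding

variable {t a b c : W}

lemma symm (h : T.ReachableAvoiding t a b) : T.ReachableAvoiding t b a :=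
  let ⟨p, hp⟩ := h
  ⟨p.reverse, by rwa [Walk.support_reverse, List.mem_reverse]⟩

lemma trans (h₁ : T.ReachableAvoiding t a b) (h₂ : T.ReachableAvoiding t b c) :
    T.ReachableAvoiding t a c :=
  let ⟨p, hp⟩ := h₁
  let ⟨q, hq⟩ := h₂
  ⟨p.append q, fun h => ((Walk.mem_support_append_iff p q).1 h).elim hp hq⟩

lemma ne_right (h : T.ReachableAvoiding t a b) : b ≠ t := by
  rintro rfl
  obtain ⟨p, hp⟩ := h
  exact hp p.end_mem_support

end ReachableAvoiding

lemma IsAcyclic.eq_of_reachableAvoiding (hT : T.IsAcyclic) {t t₀ t₁ : W}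
    (h₀ : T.Adj t t₀) (h₁ : T.Adj t t₁) (h : T.ReachableAvoiding t t₀ t₁) : t₀ = t₁ := by
  classical
  obtain ⟨p, hp⟩ := h
  have hpath : (Walk.cons h₀ p.bypass).IsPath :=
    (Walk.cons_isPath_iff _ _).2
      ⟨p.bypass_isPath, fun h => hp (p.support_bypass_subset_support h)⟩
  have hedge : (Walk.cons h₁ Walk.nil).IsPath := by simp [h₁.ne]
  have heq := (hT.subsingleton_path t t₁).elim ⟨_, hpath⟩ ⟨_, hedge⟩
  exact (Walk.cons.inj (congrArg Subtype.val heq)).1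

end SimpleGraph

namespace TreeDecomp

variable (D : TreeDecomp G T) {t t₀ r r₁ r₂ : W} {x y : V}

lemma exists_walk_forall_mem_bag (h₁ : x ∈ D.bag r₁) (h₂ : x ∈ D.bag r₂) :
    ∃ p : T.Walk r₁ r₂, ∀ r ∈ p.support, x ∈ D.bag r :=
  ((D.bags_connected x).preconnected ⟨r₁, h₁⟩ ⟨r₂, h₂⟩).exists_walk_of_induce

lemma reachableAvoiding_of_not_mem_bag (hx : x ∉ D.bag t) (h₁ : x ∈ D.bag r₁)
    (h₂ : x ∈ D.bag r₂) : T.ReachableAvoiding t r₁ r₂ :=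
  let ⟨p, hp⟩ := D.exists_walk_forall_mem_bag h₁ h₂
  ⟨p, fun ht => hx (hp t ht)⟩

lemma exists_adj_mem_bag_reachableAvoiding (hxt : x ∈ D.bag t) (hxr : x ∈ D.bag r)
    (hr : r ≠ t) : ∃ t₀, T.Adj t t₀ ∧ x ∈ D.bag t₀ ∧ T.ReachableAvoiding t t₀ r := by
  classical
  obtain ⟨p, hp⟩ := D.exists_walk_forall_mem_bag hxt hxr
  obtain ⟨t₀, h₀, q, hq⟩ := Walk.exists_eq_cons_of_ne hr.symm p.bypass
  have hpath := p.bypass_isPath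
  rw [hq, Walk.cons_isPath_iff] at hpath
  have ht₀ : t₀ ∈ p.bypass.support := by rw [hq]; simp
  exact ⟨t₀, h₀, hp t₀ (p.support_bypass_subset_support ht₀), q, hpath.2⟩

def InBranch (t t₀ : W) (x : V) : Prop :=
  ∃ r, x ∈ D.bag r ∧ T.ReachableAvoiding t t₀ r

variable {D}

lemma InBranch.of_adj (hx : x ∉ D.bag t) (h : D.InBranch t t₀ x) (hxy : G.Adj x y) :
    D.InBranch t t₀ y :=
  let ⟨_, hxr, hr⟩ := h
  let ⟨r', hxr', hyr'⟩ := D.edge_in_bag hxy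
  ⟨r', hyr', hr.trans (D.reachableAvoiding_of_not_mem_bag hx hxr hxr')⟩

lemma exists_inBranch_of_adj (hx : x ∈ D.bag t) (hy : y ∉ D.bag t) (hxy : G.Adj x y) :
    ∃ t₀, T.Adj t t₀ ∧ x ∈ D.bag t₀ ∧ D.InBranch t t₀ y := by
  obtain ⟨r, hxr, hyr⟩ := D.edge_in_bag hxy
  obtain ⟨t₀, h₀, hx₀, hr⟩ :=
    D.exists_adj_mem_bag_reachableAvoiding hx hxr (by rintro rfl; exact hy hyr)
  exact ⟨t₀, h₀, hx₀, r, hyr, hr⟩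

lemma InBranch.mem_bag (h₀ : T.Adj t t₀) (hx : x ∈ D.bag t) (h : D.InBranch t t₀ x) :
    x ∈ D.bag t₀ := by
  obtain ⟨r, hxr, hr⟩ := h
  obtain ⟨t₁, h₁, hx₁, hr₁⟩ := D.exists_adj_mem_bag_reachableAvoiding hx hxr hr.ne_right
  rwa [D.isTree.isAcyclic.eq_of_reachableAvoiding h₀ h₁ (hr.trans hr₁.symm)]

variable (D t) {S : Set V}

def TorsoLinked (u : ↥(S ∩ D.bag t)) (w : V) : Prop :=
  ∃ hw : w ∈ S ∩ D.bag t, ((torso G T D t).induce (S ∩ D.bag t)).Reachable u ⟨w, hw⟩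

/-- The invariant propagated along a walk of `G[S]` started at `u`: a vertex outside `β(t)`
lies in the branch at a neighbour `t₀` of `t` whose adhesion set `β(t) ∩ β(t₀)` contains a
vertex linked to `u`. -/
def TorsoAttached (u : ↥(S ∩ D.bag t)) (x : V) : Prop :=
  (x ∈ D.bag t → D.TorsoLinked t u x) ∧
    (x ∉ D.bag t →
      ∃ t₀ w, T.Adj t t₀ ∧ w ∈ D.bag t₀ ∧ D.TorsoLinked t u w ∧ D.InBranch t t₀ x)

variable {D t} {u : ↥(S ∩ D.bag t)} {w : V}

lemma TorsoLinked.of_adj (h : D.TorsoLinked t u w) (hwy : (torso G T D t).Adj w y)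
    (hy : y ∈ S) : D.TorsoLinked t u y :=
  let ⟨_, hr⟩ := h
  ⟨⟨hy, hwy.2.2.1⟩, hr.trans (Adj.reachable hwy)⟩

lemma TorsoAttached.of_adj (h : D.TorsoAttached t u x) (hxy : G.Adj x y) (hy : y ∈ S) :
    D.TorsoAttached t u y := by
  constructor
  · intro hyt
    by_cases hxt : x ∈ D.bag t
    · exact (h.1 hxt).of_adj ⟨hxy.ne, hxt, hyt, Or.inl hxy⟩ hy
    · obtain ⟨t₀, w, h₀, hw₀, hw, hx⟩ := h.2 hxt
      have hy₀ := (hx.of_adj hxt hxy).mem_bag h₀ hyt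
      obtain rfl | hwy := eq_or_ne w y
      · exact hw
      · exact hw.of_adj ⟨hwy, hw.1.2, hyt, Or.inr ⟨t₀, h₀, hw₀, hy₀⟩⟩ hy
  · intro hyt
    by_cases hxt : x ∈ D.bag t
    · obtain ⟨t₀, h₀, hx₀, hy⟩ := exists_inBranch_of_adj hxt hyt hxy
      exact ⟨t₀, x, h₀, hx₀, h.1 hxt, hy⟩
    · obtain ⟨t₀, w, h₀, hw₀, hw, hx⟩ := h.2 hxt
      exact ⟨t₀, w, h₀, hw₀, hw, hx.of_adj hxt hxy⟩

lemma TorsoAttached.of_walk (h : D.TorsoAttached t u x) (p : G.Walk x y)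
    (hp : ∀ z ∈ p.support, z ∈ S) : D.TorsoAttached t u y := by
  induction p with
  | nil => exact h
  | cons hxz q ih =>
    exact ih (h.of_adj hxz (hp _ (q.start_mem_support.tail _)))
      fun z hz => hp z (hz.tail _)

variable (D t) in
theorem preconnected_torso_induce (hS : (G.induce S).Preconnected) :
    ((torso G T D t).induce (S ∩ D.bag t)).Preconnected := by
  rintro u ⟨v, hvS, hvt⟩
  obtain ⟨p, hp⟩ := (hS ⟨u, u.2.1⟩ ⟨v, hvS⟩).exists_walk_of_induce
  have hu : D.TorsoAttached t u u := ⟨fun _ => ⟨u.2, .rfl⟩, fun h => absurd u.2.2 h⟩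
  exact ((hu.of_walk p hp).1 hvt).2

end TreeDecomp

lemma SimpleGraph.exists_adj_of_preconnected_induce_union {A B : Set V} (hAB : Disjoint A B)
    (h : (G.induce (A ∪ B)).Preconnected) {a b : V} (ha : a ∈ A) (hb : b ∈ B) :
    ∃ u ∈ A, ∃ w ∈ B, G.Adj u w := by
  obtain ⟨p⟩ := h ⟨a, .inl ha⟩ ⟨b, .inr hb⟩
  obtain ⟨d, -, hd₁, hd₂⟩ :=
    p.exists_boundary_dart {x | x.1 ∈ A} ha fun hb' => Set.disjoint_left.1 hAB hb' hb
  exact ⟨_, hd₁, _, d.snd.2.resolve_left hd₂, d.adj⟩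

end

/-- If the bag at t meets every branch set of a minor model of K_s in G, then the sets
V(H_j) ∩ β(t) induce connected subgraphs of the torso at t and form a minor model of
K_s in the torso. -/
theorem stmt15 {V W : Type*} (G : SimpleGraph V) (T : SimpleGraph W)
    (D : TreeDecomp G T) (s : ℕ) (H : Fin s → Set V)
    (hdisj : ∀ i j, i ≠ j → Disjoint (H i) (H j))
    (hconn : ∀ i, (SimpleGraph.induce (H i) G).Connected)
    (hadj : ∀ i j, i ≠ j → ∃ u ∈ H i, ∃ v ∈ H j, G.Adj u v)
    (t : W) (ht : ∀ j, (D.bag t ∩ H j).Nonempty) :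
    (∀ j, (SimpleGraph.induce (H j ∩ D.bag t) (torso G T D t)).Connected) ∧
    (∀ i j, i ≠ j →
      ∃ u ∈ H i ∩ D.bag t, ∃ w ∈ H j ∩ D.bag t, (torso G T D t).Adj u w) := by
  refine ⟨fun j => ?_, fun i j hij => ?_⟩
  · obtain ⟨a, hat, haj⟩ := ht j
    exact { preconnected := D.preconnected_torso_induce t (hconn j).preconnected
            nonempty := ⟨⟨a, haj, hat⟩⟩ }
  · obtain ⟨a, hat, hai⟩ := ht i
    obtain ⟨b, hbt, hbj⟩ := ht j
    obtain ⟨u, hu, v, hv, huv⟩ := hadj i j hij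
    have hHij := connected_induce_union (hconn i).preconnected (hconn j).preconnected hu hv huv
    have h := D.preconnected_torso_induce t hHij.preconnected
    rw [Set.union_inter_distrib_right] at h
    exact exists_adj_of_preconnected_induce_union
      ((hdisj i j hij).mono Set.inter_subset_left Set.inter_subset_left)
      h ⟨hai, hat⟩ ⟨hbj, hbt⟩
end

section
/- Let G be a graph, L a linear order on V(G), and H the auxiliary graph on V(G) with an edge uv whenever u ∈ WReach_r[G,L,v] or v ∈ WReach_r[G,L,u]. If |WReach_r[G,L,v]| ≤ c for all v, then H is c-degenerate; consequently every set A ⊆ V(G) contains a subset I of size at least |A|/(c+1) with WReach_r[G,L,v] ∩ I = {v} for every v ∈ I. -/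
/-- The auxiliary graph on V(G) with an edge uv whenever u is weakly r-reachable from
v or vice versa. -/
def WReachGraph {V : Type*} (G : SimpleGraph V) (L : LinearOrder V) (r : ℕ) :
    SimpleGraph V where
  Adj u v := u ≠ v ∧ (u ∈ WReach G L r v ∨ v ∈ WReach G L r u)
  symm := ⟨by rintro u v ⟨h1, h2⟩; exact ⟨h1.symm, h2.symm⟩⟩
  loopless := ⟨by rintro v ⟨h, -⟩; exact h rfl⟩

/-!
If `u ≠ v` are adjacent in the auxiliary graph, the `L`-larger of the two weakly reaches the
smaller one, since the `L`-minimum of a path from `v` to `u ∈ WReach v` is `u`. So the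
`L`-maximum of any vertex set `A` has all its neighbours in `A` inside its own weak reachability
set, hence at most `c` of them. Greedily keeping such a vertex and discarding its neighbours
yields an independent set of the auxiliary graph of size `≥ |A|/(c+1)`, and independence is
exactly the condition `WReach v ∩ I = {v}`.
-/

namespace SimpleGraph

variable {V : Type*} (H : SimpleGraph V) (c : ℕ)

def Degenerate : Prop :=
  ∀ A : Finset V, A.Nonempty → ∃ v ∈ A, {u | H.Adj v u ∧ u ∈ A}.ncard ≤ c

variable {H c}

theorem Degenerate.exists_isIndepSet_card_le_mul (hH : H.Degenerate c) (A : Finset V) :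
    ∃ I ⊆ A, H.IsIndepSet (I : Set V) ∧ A.card ≤ (c + 1) * I.card := by
  classical
  induction A using Finset.strongInduction with
  | H A ih =>
  rcases A.eq_empty_or_nonempty with rfl | hA
  · exact ⟨∅, subset_rfl, by simp, by simp⟩
  obtain ⟨v, hvA, hv⟩ := hH A hA
  set N := A.filter (H.Adj v)
  have hN : N.card ≤ c := by
    rwa [← Set.ncard_coe_finset, show (N : Set V) = {u | H.Adj v u ∧ u ∈ A} by
      ext; simp [N, and_comm]]
  obtain ⟨I, hIsub, hI, hcard⟩ := ih (A \ insert v N)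
    (Finset.sdiff_ssubset (Finset.insert_subset hvA (Finset.filter_subset _ _)) ⟨v, by simp⟩)
  have hIA : I ⊆ A := hIsub.trans Finset.sdiff_subset
  have hvI : ∀ u ∈ I, ¬ H.Adj v u := fun u hu hadj ↦ by
    simpa [N, hIA hu, hadj] using hIsub hu
  refine ⟨insert v I, Finset.insert_subset hvA hIA, ?_, ?_⟩
  · rw [Finset.coe_insert]
    exact hI.insert fun u hu _ ↦ ⟨hvI u hu, fun h ↦ hvI u hu h.symm⟩
  · have hvnI : v ∉ I := fun h ↦ by simpa using hIsub h
    calc A.card ≤ (A \ insert v N).card + (insert v N).card := Finset.card_le_card_sdiff_add_card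
      _ ≤ (c + 1) * I.card + (c + 1) := by grw [hcard, Finset.card_insert_le, hN]
      _ = (c + 1) * (insert v I).card := by rw [Finset.card_insert_of_notMem hvnI]; ring

end SimpleGraph

section WReach

variable {V : Type*} {G : SimpleGraph V} {L : LinearOrder V} {r : ℕ}

theorem self_mem_WReach (v : V) : v ∈ WReach G L r v :=
  ⟨.nil, .nil, by simp, by simp⟩

theorem le_of_mem_WReach {u v : V} (h : u ∈ WReach G L r v) : L.le u v := by
  obtain ⟨p, -, -, hle⟩ := h
  exact hle v p.start_mem_support

theorem WReachGraph_degenerate [Finite V] {c : ℕ} (hc : ∀ v : V, (WReach G L r v).ncard ≤ c) :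
    (WReachGraph G L r).Degenerate c := by
  let : LinearOrder V := L
  intro A hA
  refine ⟨A.max' hA, A.max'_mem hA, le_trans (Set.ncard_le_ncard ?_ (Set.toFinite _)) (hc (A.max' hA))⟩
  rintro u ⟨⟨hne, hu | hv⟩, huA⟩
  · exact absurd (le_antisymm (A.le_max' u huA) (le_of_mem_WReach hu)) hne.symm
  · exact hv

theorem WReach_inter_eq_singleton {I : Set V} (hI : (WReachGraph G L r).IsIndepSet I)
    {v : V} (hv : v ∈ I) : WReach G L r v ∩ I = {v} := by
  refine Set.eq_singleton_iff_unique_mem.2 ⟨⟨self_mem_WReach v, hv⟩, ?_⟩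
  rintro u ⟨hu, huI⟩
  by_contra hne
  exact hI huI hv hne ⟨hne, Or.inl hu⟩

end WReach

theorem stmt19_general {V : Type*} [Fintype V] (G : SimpleGraph V)
    (L : LinearOrder V) (r c : ℕ)
    (hc : ∀ v : V, (WReach G L r v).ncard ≤ c) :
    (∀ A : Finset V, A.Nonempty →
      ∃ v ∈ A, {u | (WReachGraph G L r).Adj v u ∧ u ∈ A}.ncard ≤ c) ∧
    (∀ A : Finset V, ∃ I ⊆ A, (A.card : ℝ) / (c + 1) ≤ I.card ∧
      ∀ v ∈ I, WReach G L r v ∩ ↑I = {v}) := by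
  have hdeg := WReachGraph_degenerate hc
  refine ⟨hdeg, fun A ↦ ?_⟩
  obtain ⟨I, hIA, hI, hcard⟩ := hdeg.exists_isIndepSet_card_le_mul A
  refine ⟨I, hIA, ?_, fun v hv ↦ WReach_inter_eq_singleton hI hv⟩
  rw [div_le_iff₀ (by positivity)]
  exact_mod_cast (mul_comm (c + 1) I.card) ▸ hcard

/-- If every vertex weakly r-reaches at most c vertices, the auxiliary graph is
c-degenerate; consequently every A contains a subset I of size at least |A|/(c+1) with
WReach_r[G,L,v] ∩ I = {v} for every v ∈ I. -/
theorem stmt19 {V : Type*} [Fintype V] [DecidableEq V] (G : SimpleGraph V)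
    (L : LinearOrder V) (r c : ℕ)
    (hc : ∀ v : V, (WReach G L r v).ncard ≤ c) :
    (∀ A : Finset V, A.Nonempty →
      ∃ v ∈ A, {u | (WReachGraph G L r).Adj v u ∧ u ∈ A}.ncard ≤ c) ∧
    (∀ A : Finset V, ∃ I ⊆ A, (A.card : ℝ) / (c + 1) ≤ I.card ∧
      ∀ v ∈ I, WReach G L r v ∩ ↑I = {v}) :=
  stmt19_general G L r c hc
end
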